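/- arXiv:2505.02280 — 3 statements merged into one kernel-verified Lean document; each statement's English description precedes it below -/
import Mathlib

section
/- Let k ∈ ℝ with k ≠ 0, let t > 0, p ∈ [1,∞), and x, y ∈ ℝ. Note (1 − e^{-2kt})/k > 0. Let μ_x := gaussianReal(e^{-kt}·x, (1 − e^{-2kt})/k) and μ_y := gaussianReal(e^{-kt}·y, (1 − e^{-2kt})/k). Then the p-Wasserstein distance between μ_x and μ_y, namely (inf over couplings π of (μ_x, μ_y) of ∫ |u − v|^p dπ(u,v))^{1/p}, equals e^{-kt}·|x − y|. -/
open MeasureTheory ProbabilityTheory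

open scoped NNReal ENNReal

section Aux
open Real

lemma my_integrable_id_gaussianReal (m : ℝ) (v : ℝ≥0) :
    Integrable id (gaussianReal m v) := by
  by_cases hv : v = 0
  · rw [hv, gaussianReal_zero_var]
    refine (integrable_const m).congr ?_
    rw [Filter.eventuallyEq_iff_exists_mem]
    exact ⟨{m}, by simp [MeasureTheory.ae_dirac_iff], by simp⟩
  rw [gaussianReal_of_var_ne_zero _ hv,
    integrable_withDensity_iff (measurable_gaussianPDF _ _)
      (ae_of_all _ fun x => ENNReal.ofReal_lt_top)]
  have hv' : (0:ℝ) < (v:ℝ) := by positivity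
  have hb : (0:ℝ) < 1 / (2 * v) := by positivity
  have key : Integrable (fun x : ℝ => x * rexp (- (x - m)^2 / (2 * v))) := by
    have h1 : Integrable (fun y : ℝ => y * rexp (-(1/(2*(v:ℝ))) * y ^ 2)
        + m * rexp (-(1/(2*(v:ℝ))) * y ^ 2)) :=
      (integrable_mul_exp_neg_mul_sq hb).add ((integrable_exp_neg_mul_sq hb).const_mul m)
    have h2 := h1.comp_sub_right m
    refine h2.congr (ae_of_all _ fun x => ?_)
    have hexp : -(1/(2*(v:ℝ))) * (x-m)^2 = -(x - m)^2 / (2*(v:ℝ)) := by ring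
    simp only [hexp]
    ring
  have heq : ∀ x : ℝ, id x * (gaussianPDF m v x).toReal
      = (√(2 * π * v))⁻¹ * (x * rexp (- (x - m)^2 / (2 * v))) := by
    intro x
    rw [gaussianPDF_def]
    simp only [ENNReal.toReal_ofReal (gaussianPDFReal_nonneg _ _ _)]
    rw [gaussianPDFReal]
    simp only [id_eq]
    ring
  simp only [heq]
  exact key.const_mul _

lemma my_integral_id_gaussianReal (m : ℝ) (v : ℝ≥0) :
    ∫ x, x ∂gaussianReal m v = m := by
  have hneg : (gaussianReal 0 v).map (fun x : ℝ => -x) = gaussianReal 0 v := by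
    have h := gaussianReal_map_const_mul (μ := 0) (v := v) (-1)
    simp only [neg_one_mul, mul_zero] at h
    convert h using 2
    ext : 1
    simp
  have h0 : ∫ x, x ∂gaussianReal 0 v = 0 := by
    have hm := integral_map (f := fun x : ℝ => x)
      (φ := fun x : ℝ => -x) (μ := gaussianReal 0 v)
      (measurable_neg.aemeasurable) aestronglyMeasurable_id
    rw [hneg] at hm
    rw [integral_neg] at hm
    linarith
  have hmap : gaussianReal m v = (gaussianReal 0 v).map (· + m) := by
    rw [gaussianReal_map_add_const, zero_add]
  rw [hmap, integral_map (f := fun x : ℝ => x) (measurable_add_const m).aemeasurable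
    aestronglyMeasurable_id]
  have hadd := integral_add (my_integrable_id_gaussianReal 0 v)
    (integrable_const m (μ := gaussianReal 0 v))
  simp only [id_eq] at hadd
  rw [hadd, h0, integral_const]
  simp

end Aux

/-- Sharp `p`-Wasserstein contraction between the time-`t` heat kernel measures of the
weighted line `(ℝ, |·|, e^{-(k/2)x²}dx)`: the `p`-Wasserstein distance between the Gaussians
`gaussianReal (e^{-kt}x, (1-e^{-2kt})/k)` and `gaussianReal (e^{-kt}y, (1-e^{-2kt})/k)`
equals `e^{-kt}|x - y|`. -/
theorem wasserstein_gaussian_heat_kernels_sharp (k t p x y : ℝ) (hk : k ≠ 0) (ht : 0 < t)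
    (hp : 1 ≤ p) (hv : 0 < (1 - Real.exp (-2 * k * t)) / k) :
    (⨅ (π : Measure (ℝ × ℝ))
        (_ : π.map Prod.fst
              = gaussianReal (Real.exp (-k * t) * x) (((1 - Real.exp (-2 * k * t)) / k).toNNReal)
            ∧ π.map Prod.snd
              = gaussianReal (Real.exp (-k * t) * y)
                  (((1 - Real.exp (-2 * k * t)) / k).toNNReal)),
      ∫⁻ z : ℝ × ℝ, ENNReal.ofReal (|z.1 - z.2| ^ p) ∂π) ^ (1 / p)
      = ENNReal.ofReal (Real.exp (-k * t) * |x - y|) := by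
  have hp0 : (0:ℝ) < p := lt_of_lt_of_le one_pos hp
  set m₁ := Real.exp (-k * t) * x with hm₁
  set m₂ := Real.exp (-k * t) * y with hm₂
  set V := ((1 - Real.exp (-2 * k * t)) / k).toNNReal with hV
  set d := m₁ - m₂ with hd
  have habs : |d| = Real.exp (-k * t) * |x - y| := by
    rw [hd, hm₁, hm₂, ← mul_sub, abs_mul, abs_of_pos (Real.exp_pos _)]
  have hFmeas : Measurable (fun z : ℝ × ℝ => ENNReal.ofReal (|z.1 - z.2| ^ p)) :=
    (((measurable_fst.sub measurable_snd).abs.pow_const p)).ennreal_ofReal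
  have hinf : (⨅ (π : Measure (ℝ × ℝ))
        (_ : π.map Prod.fst = gaussianReal m₁ V ∧ π.map Prod.snd = gaussianReal m₂ V),
      ∫⁻ z : ℝ × ℝ, ENNReal.ofReal (|z.1 - z.2| ^ p) ∂π) = ENNReal.ofReal |d| ^ p := by
    apply le_antisymm
    · -- upper bound via explicit coupling
      set g : ℝ → ℝ × ℝ := fun u => (u, u + (m₂ - m₁)) with hg
      have hgm : Measurable g := measurable_id.prodMk (measurable_id.add_const _)
      refine iInf_le_of_le ((gaussianReal m₁ V).map g) (iInf_le_of_le ⟨?_, ?_⟩ ?_)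
      · rw [Measure.map_map measurable_fst hgm]
        have : Prod.fst ∘ g = id := rfl
        rw [this, Measure.map_id]
      · rw [Measure.map_map measurable_snd hgm]
        have : Prod.snd ∘ g = (· + (m₂ - m₁)) := rfl
        rw [this, gaussianReal_map_add_const]
        congr 1
        ring
      · rw [lintegral_map hFmeas hgm]
        have hconst : ∀ u : ℝ, ENNReal.ofReal (|(g u).1 - (g u).2| ^ p)
            = ENNReal.ofReal (|d| ^ p) := by
          intro u
          simp only [hg]
          rw [sub_add_cancel_left, abs_neg, abs_sub_comm, ← hd]
        simp only [hconst]
        rw [lintegral_const, measure_univ, mul_one,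
          ENNReal.ofReal_rpow_of_nonneg (abs_nonneg _) hp0.le]
    · -- lower bound via Jensen
      refine le_iInf fun π => le_iInf fun hπ => ?_
      obtain ⟨h1, h2⟩ := hπ
      have hprob : IsProbabilityMeasure π := by
        constructor
        have h := congrArg (fun μ : Measure ℝ => μ Set.univ) h1
        simp only [Measure.map_apply measurable_fst MeasurableSet.univ,
          Set.preimage_univ] at h
        rw [h]
        exact measure_univ
      have h₁int : Integrable (fun z : ℝ × ℝ => z.1) π := by
        have h := my_integrable_id_gaussianReal m₁ V
        rw [← h1] at h
        simpa [Function.comp] using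
          (integrable_map_measure h.aestronglyMeasurable measurable_fst.aemeasurable).mp h
      have h₂int : Integrable (fun z : ℝ × ℝ => z.2) π := by
        have h := my_integrable_id_gaussianReal m₂ V
        rw [← h2] at h
        simpa [Function.comp] using
          (integrable_map_measure h.aestronglyMeasurable measurable_snd.aemeasurable).mp h
      have hf_int : Integrable (fun z : ℝ × ℝ => z.1 - z.2) π := h₁int.sub h₂int
      have hmean1 : ∫ z : ℝ × ℝ, z.1 ∂π = m₁ := by
        have h := integral_map (f := fun u : ℝ => u) (φ := Prod.fst) (μ := π)
          measurable_fst.aemeasurable aestronglyMeasurable_id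
        rw [h1, my_integral_id_gaussianReal] at h
        exact h.symm
      have hmean2 : ∫ z : ℝ × ℝ, z.2 ∂π = m₂ := by
        have h := integral_map (f := fun u : ℝ => u) (φ := Prod.snd) (μ := π)
          measurable_snd.aemeasurable aestronglyMeasurable_id
        rw [h2, my_integral_id_gaussianReal] at h
        exact h.symm
      have hintegral : ∫ z : ℝ × ℝ, (z.1 - z.2) ∂π = d := by
        rw [integral_sub h₁int h₂int, hmean1, hmean2]
      set F : ℝ × ℝ → ℝ := fun z => z.1 - z.2 with hF
      have hFm : AEStronglyMeasurable F π :=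
        (measurable_fst.sub measurable_snd).aestronglyMeasurable
      have step1 : ENNReal.ofReal |d| ≤ ∫⁻ z, (‖F z‖₊ : ℝ≥0∞) ∂π := by
        simp_rw [← enorm_eq_nnnorm]
        rw [← ofReal_integral_norm_eq_lintegral_enorm hf_int]
        apply ENNReal.ofReal_le_ofReal
        rw [← hintegral]
        simpa [Real.norm_eq_abs] using norm_integral_le_integral_norm (f := F) (μ := π)
      have step2 : eLpNorm F 1 π ≤ eLpNorm F (ENNReal.ofReal p) π :=
        eLpNorm_le_eLpNorm_of_exponent_le
          (by rw [ENNReal.one_le_ofReal]; exact hp) hFm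
      have step3 : eLpNorm F (ENNReal.ofReal p) π
          = (∫⁻ z, (‖F z‖₊ : ℝ≥0∞) ^ p ∂π) ^ (1 / p) := by
        simp_rw [← enorm_eq_nnnorm]
        rw [eLpNorm_eq_lintegral_rpow_enorm_toReal (ne_of_gt (ENNReal.ofReal_pos.mpr hp0))
          ENNReal.ofReal_ne_top, ENNReal.toReal_ofReal hp0.le]
      have hchain : ENNReal.ofReal |d| ≤ (∫⁻ z, (‖F z‖₊ : ℝ≥0∞) ^ p ∂π) ^ (1 / p) := by
        calc ENNReal.ofReal |d| ≤ ∫⁻ z, (‖F z‖₊ : ℝ≥0∞) ∂π := step1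
          _ = eLpNorm F 1 π := (eLpNorm_one_eq_lintegral_enorm (f := F) (μ := π)).symm
          _ ≤ eLpNorm F (ENNReal.ofReal p) π := step2
          _ = _ := step3
      have hpt : (fun z : ℝ × ℝ => ENNReal.ofReal (|z.1 - z.2| ^ p))
          = fun z => (‖F z‖₊ : ℝ≥0∞) ^ p := by
        funext z
        rw [← enorm_eq_nnnorm, ← ofReal_norm, ENNReal.ofReal_rpow_of_nonneg (norm_nonneg _) hp0.le,
          Real.norm_eq_abs]
      rw [hpt]
      calc ENNReal.ofReal |d| ^ p
          ≤ ((∫⁻ z, (‖F z‖₊ : ℝ≥0∞) ^ p ∂π) ^ (1 / p)) ^ p :=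
            ENNReal.rpow_le_rpow hchain hp0.le
        _ = ∫⁻ z, (‖F z‖₊ : ℝ≥0∞) ^ p ∂π := by
            rw [← ENNReal.rpow_mul, one_div_mul_cancel hp0.ne', ENNReal.rpow_one]
  rw [hinf, ← ENNReal.rpow_mul, mul_one_div_cancel hp0.ne', ENNReal.rpow_one, habs]
end

section
/- Let V be a real vector space and let φ : V → ℝ be a function such that for every x, v ∈ V there exists a constant c(x,v) ∈ ℝ with φ(x + s·v) = φ(x) + c(x,v)·s for all s ∈ ℝ (i.e. φ is linear along every line). Then φ is affine: there exist a linear map ℓ : V → ℝ and a constant b ∈ ℝ such that φ(x) = ℓ(x) + b for all x ∈ V. -/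
/-- A real-valued function on a real vector space that is linear along every line is affine:
it is a linear map plus a constant. -/
theorem affine_of_linear_along_lines {V : Type*} [AddCommGroup V] [Module ℝ V] (φ : V → ℝ)
    (h : ∀ x v : V, ∃ c : ℝ, ∀ s : ℝ, φ (x + s • v) = φ x + c * s) :
    ∃ (ℓ : V →ₗ[ℝ] ℝ) (b : ℝ), ∀ x, φ x = ℓ x + b := by
  have hom : ∀ (s : ℝ) (v : V), φ (s • v) - φ 0 = s * (φ v - φ 0) := by
    intro s v
    obtain ⟨c, hc⟩ := h 0 v
    have h1 := hc 1
    have hs := hc s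
    simp only [zero_add, one_smul, mul_one] at h1 hs
    rw [hs, h1]; ring
  have mid : ∀ x y : V, φ ((1/2 : ℝ) • (x + y)) = (φ x + φ y) / 2 := by
    intro x y
    obtain ⟨c, hc⟩ := h x (y - x)
    have h1 := hc 1
    have hh := hc (1/2)
    have e1 : x + (1 : ℝ) • (y - x) = y := by module
    have e2 : x + (1/2 : ℝ) • (y - x) = (1/2 : ℝ) • (x + y) := by module
    rw [e1, mul_one] at h1
    rw [e2] at hh
    rw [hh, h1]; ring
  have add : ∀ x y : V, φ (x + y) - φ 0 = (φ x - φ 0) + (φ y - φ 0) := by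
    intro x y
    have h1 := hom (1/2) (x + y)
    have h2 := mid x y
    rw [h2] at h1
    linarith
  refine ⟨{ toFun := fun x => φ x - φ 0,
            map_add' := by intro x y; simpa using add x y,
            map_smul' := by intro s x; simpa using hom s x }, φ 0, ?_⟩
  intro x; simp
end

section
/- Let (X, d) and (M, ρ) be metric spaces, let K ∈ ℝ and 0 < s < t, let x, y ∈ X, and let γ : [0,1] → X be a constant-speed geodesic from x to y, i.e. γ(0) = x, γ(1) = y and d(γ(a), γ(b)) = |a − b|·d(x,y) for all a, b ∈ [0,1]. Let P_s, P_t : X → M be maps satisfying: (i) ρ(P_t u, P_t v) ≤ e^{−K(t−s)}·ρ(P_s u, P_s v) for all u, v ∈ X; (ii) ρ(P_s u, P_s v) ≤ e^{−Ks}·d(u,v) for all u, v ∈ X; (iii) ρ(P_t x, P_t y) = e^{−Kt}·d(x,y). Then for all 0 ≤ a ≤ b ≤ 1 one has ρ(P_s γ(a), P_s γ(b)) = e^{−Ks}·d(γ(a), γ(b)) and ρ(P_t γ(a), P_t γ(b)) = e^{−Kt}·d(γ(a), γ(b)). -/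
/-- Metric content of Lemma 3.6: if the contraction estimates (i), (ii) hold and the sharp
contraction (iii) is attained at `(x,y)` at time `t`, then the sharp contraction propagates
to the earlier time `s` and to all intermediate pairs of points on a geodesic from `x` to
`y`. -/
theorem sharp_contraction_propagates {X M : Type*} [MetricSpace X] [MetricSpace M]
    (K : ℝ) (s t : ℝ) (hs : 0 < s) (hst : s < t) (x y : X) (γ : ℝ → X)
    (hγ0 : γ 0 = x) (hγ1 : γ 1 = y)
    (hgeo : ∀ a ∈ Set.Icc (0 : ℝ) 1, ∀ b ∈ Set.Icc (0 : ℝ) 1,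
      dist (γ a) (γ b) = |a - b| * dist x y)
    (Ps Pt : X → M)
    (hcontr : ∀ u v : X, dist (Pt u) (Pt v) ≤ Real.exp (-K * (t - s)) * dist (Ps u) (Ps v))
    (hcontr' : ∀ u v : X, dist (Ps u) (Ps v) ≤ Real.exp (-K * s) * dist u v)
    (hsharp : dist (Pt x) (Pt y) = Real.exp (-K * t) * dist x y) :
    ∀ a b : ℝ, 0 ≤ a → a ≤ b → b ≤ 1 →
      dist (Ps (γ a)) (Ps (γ b)) = Real.exp (-K * s) * dist (γ a) (γ b)
        ∧ dist (Pt (γ a)) (Pt (γ b)) = Real.exp (-K * t) * dist (γ a) (γ b) := by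
  intro a b ha hab hb1
  have ha1 : a ≤ 1 := hab.trans hb1
  have hb0 : 0 ≤ b := ha.trans hab
  have hmem0 : (0:ℝ) ∈ Set.Icc (0:ℝ) 1 := by constructor <;> norm_num
  have hmem1 : (1:ℝ) ∈ Set.Icc (0:ℝ) 1 := by constructor <;> norm_num
  have hmema : a ∈ Set.Icc (0:ℝ) 1 := ⟨ha, ha1⟩
  have hmemb : b ∈ Set.Icc (0:ℝ) 1 := ⟨hb0, hb1⟩
  set d := dist x y with hd
  have hd0 : 0 ≤ d := dist_nonneg
  have dxa : dist x (γ a) = a * d := by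
    have h := hgeo 0 hmem0 a hmema
    rw [hγ0] at h; rw [h, abs_of_nonpos (by linarith)]; ring
  have dab : dist (γ a) (γ b) = (b - a) * d := by
    have h := hgeo a hmema b hmemb
    rw [h, abs_of_nonpos (by linarith)]; ring
  have dby : dist (γ b) y = (1 - b) * d := by
    have h := hgeo b hmemb 1 hmem1
    rw [hγ1] at h; rw [h, abs_of_nonpos (by linarith)]; ring
  have hE : Real.exp (-K*(t-s)) * Real.exp (-K*s) = Real.exp (-K*t) := by
    rw [← Real.exp_add]; ring_nf
  have hexp1 : (0:ℝ) < Real.exp (-K*(t-s)) := Real.exp_pos _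
  have hexpt : (0:ℝ) < Real.exp (-K*t) := Real.exp_pos _
  have hPt : ∀ u v, dist (Pt u) (Pt v) ≤ Real.exp (-K*t) * dist u v := by
    intro u v
    calc dist (Pt u) (Pt v) ≤ Real.exp (-K*(t-s)) * dist (Ps u) (Ps v) := hcontr u v
      _ ≤ Real.exp (-K*(t-s)) * (Real.exp (-K*s) * dist u v) :=
          mul_le_mul_of_nonneg_left (hcontr' u v) hexp1.le
      _ = Real.exp (-K*t) * dist u v := by rw [← mul_assoc, hE]
  have hA : dist (Pt x) (Pt (γ a)) ≤ Real.exp (-K*t) * (a * d) := by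
    have := hPt x (γ a); rwa [dxa] at this
  have hC : dist (Pt (γ b)) (Pt y) ≤ Real.exp (-K*t) * ((1 - b) * d) := by
    have := hPt (γ b) y; rwa [dby] at this
  have hB : dist (Pt (γ a)) (Pt (γ b)) ≤ Real.exp (-K*t) * ((b - a) * d) := by
    have := hPt (γ a) (γ b); rwa [dab] at this
  have htri : dist (Pt x) (Pt y) ≤ dist (Pt x) (Pt (γ a)) + dist (Pt (γ a)) (Pt (γ b))
      + dist (Pt (γ b)) (Pt y) := by
    calc dist (Pt x) (Pt y) ≤ dist (Pt x) (Pt (γ b)) + dist (Pt (γ b)) (Pt y) :=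
          dist_triangle _ _ _
      _ ≤ dist (Pt x) (Pt (γ a)) + dist (Pt (γ a)) (Pt (γ b)) + dist (Pt (γ b)) (Pt y) := by
          have := dist_triangle (Pt x) (Pt (γ a)) (Pt (γ b)); linarith
  rw [hsharp] at htri
  have hBeq : dist (Pt (γ a)) (Pt (γ b)) = Real.exp (-K*t) * ((b - a) * d) := by nlinarith
  have hPseq : dist (Ps (γ a)) (Ps (γ b)) = Real.exp (-K*s) * ((b - a) * d) := by
    have hub : dist (Ps (γ a)) (Ps (γ b)) ≤ Real.exp (-K*s) * ((b - a) * d) := by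
      have := hcontr' (γ a) (γ b); rwa [dab] at this
    have hlb : Real.exp (-K*t) * ((b - a) * d)
        ≤ Real.exp (-K*(t-s)) * dist (Ps (γ a)) (Ps (γ b)) := hBeq ▸ hcontr (γ a) (γ b)
    have h2 : Real.exp (-K*(t-s)) * (Real.exp (-K*s) * ((b - a) * d))
        ≤ Real.exp (-K*(t-s)) * dist (Ps (γ a)) (Ps (γ b)) := by
      rw [← mul_assoc, hE]; exact hlb
    have := le_of_mul_le_mul_left h2 hexp1
    linarith
  exact ⟨by rw [hPseq, dab], by rw [hBeq, dab]⟩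
end
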